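/- arXiv:1911.09379 — 2 statements merged into one kernel-verified Lean document; each statement's English description precedes it below -/
import Mathlib

section
/- Triangle augmentation, forward direction: let (G, rk) be an SRTI instance and let G' arise from G by adding, for each vertex v ∈ V(G), two new vertices v' and v'' together with edges {v,v'}, {v,v''}, {v',v''}, with ranks rk_v(v') = α_v + 1 and rk_v(v'') = α_v + 2 where α_v = max over w ∈ N_G(v) of rk_v(w), and rk_{v'}(v) = 2, rk_{v'}(v'') = 1, rk_{v''}(v) = 1, rk_{v''}(v') = 2. If G has a perfect stable matching, then G' has a stable matching (namely, the perfect stable matching of G together with all edges {v', v''}). -/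
open scoped Classical

noncomputable section

/-- A matching of a graph `G`, given by the partner function: `partner v = v` means
that `v` is unmatched, and otherwise `v` is matched to `partner v`, which must be one
of its neighbours in the acceptability graph `G`. -/
structure Matching {V : Type} (G : SimpleGraph V) where
  partner : V → V
  involutive : ∀ v, partner (partner v) = v
  adj_of_ne : ∀ v, partner v ≠ v → G.Adj v (partner v)

/-- The set of edges of a matching. -/
def Matching.edgeSet {V : Type} {G : SimpleGraph V} (M : Matching G) : Set (Sym2 V) :=
  {e | ∃ v, M.partner v ≠ v ∧ e = s(v, M.partner v)}

/-- The pair `{v, w}` is blocking for the matching `M` (with respect to the rank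
functions `rk`, where `rk v w = ⊤` encodes that `v` prefers any acceptable partner to
`w`; in particular `rk v v = ⊤`, so that an unmatched agent prefers every neighbour to
staying alone): `v` and `w` are adjacent, and each strictly prefers the other to its
current situation. -/
def IsBlocking {V : Type} (G : SimpleGraph V) (rk : V → V → ℕ∞) (M : Matching G)
    (v w : V) : Prop :=
  G.Adj v w ∧ rk v w < rk v (M.partner v) ∧ rk w v < rk w (M.partner w)

/-- A matching is stable if no edge of `G` is blocking. -/
def Stable {V : Type} (G : SimpleGraph V) (rk : V → V → ℕ∞) (M : Matching G) : Prop :=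
  ∀ v w : V, ¬ IsBlocking G rk M v w
/-- The graph `G'` obtained from `G` by adding, for each vertex `v`, two new vertices
`v' = .inr (.inl v)` and `v'' = .inr (.inr v)` together with the triangle edges
`{v,v'}`, `{v,v''}` and `{v',v''}`. -/
def triGraph {V : Type} (G : SimpleGraph V) : SimpleGraph (V ⊕ V ⊕ V) where
  Adj a b :=
    match a, b with
    | Sum.inl v, Sum.inl w => G.Adj v w
    | Sum.inl v, Sum.inr (Sum.inl w) => v = w
    | Sum.inl v, Sum.inr (Sum.inr w) => v = w
    | Sum.inr (Sum.inl v), Sum.inl w => v = w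
    | Sum.inr (Sum.inr v), Sum.inl w => v = w
    | Sum.inr (Sum.inl v), Sum.inr (Sum.inr w) => v = w
    | Sum.inr (Sum.inr v), Sum.inr (Sum.inl w) => v = w
    | _, _ => False
  symm := by
    constructor
    rintro (v | v | v) (w | w | w) h
    · exact h.symm
    · exact h.symm
    · exact h.symm
    · exact h.symm
    · exact h
    · exact h.symm
    · exact h.symm
    · exact h.symm
    · exact h
  loopless := by
    constructor
    rintro (v | v | v) h
    · exact G.irrefl h
    · exact h
    · exact h

/-- The largest rank that `v` assigns to a neighbour in `G`. -/
def maxRank {V : Type} (G : SimpleGraph V) (rk : V → V → ℕ∞) (v : V) : ℕ∞ :=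
  ⨆ w ∈ G.neighborSet v, rk v w

/-- The ranks for the triangle-augmented instance: writing `α_v` for the largest rank
`v` assigns to a neighbour in `G`, we set `rk_v(v') = α_v + 1`, `rk_v(v'') = α_v + 2`,
`rk_{v'}(v) = 2`, `rk_{v'}(v'') = 1`, `rk_{v''}(v) = 1` and `rk_{v''}(v') = 2`;
all other (non-adjacent) pairs get rank `⊤`. -/
def triRank {V : Type} [DecidableEq V] (G : SimpleGraph V) (rk : V → V → ℕ∞) :
    (V ⊕ V ⊕ V) → (V ⊕ V ⊕ V) → ℕ∞
  | Sum.inl v, Sum.inl w => rk v w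
  | Sum.inl v, Sum.inr (Sum.inl w) => if v = w then maxRank G rk v + 1 else ⊤
  | Sum.inl v, Sum.inr (Sum.inr w) => if v = w then maxRank G rk v + 2 else ⊤
  | Sum.inr (Sum.inl v), Sum.inl w => if v = w then 2 else ⊤
  | Sum.inr (Sum.inl v), Sum.inr (Sum.inr w) => if v = w then 1 else ⊤
  | Sum.inr (Sum.inr v), Sum.inl w => if v = w then 1 else ⊤
  | Sum.inr (Sum.inr v), Sum.inr (Sum.inl w) => if v = w then 2 else ⊤
  | _, _ => ⊤

/-! Each original vertex `v` is matched in `G` to a partner it ranks at most `α_v`, so it weakly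
prefers that partner to `v'` and `v''`: no edge to a new vertex blocks, and the edges of `G` do not
block because `M` is stable. The only remaining edges, `{v', v''}`, belong to the matching. -/

namespace Matching

variable {V : Type} {G : SimpleGraph V}

def triAugment (M : Matching G) : Matching (triGraph G) where
  partner := Sum.elim (fun v => Sum.inl (M.partner v))
    (Sum.elim (fun v => Sum.inr (Sum.inr v)) (fun v => Sum.inr (Sum.inl v)))
  involutive := by rintro (v | v | v) <;> simp [M.involutive]
  adj_of_ne := by
    rintro (v | v | v) h
    · exact M.adj_of_ne v fun hv => h (by simp [hv])
    · exact rfl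
    · exact rfl

end Matching

section

variable {V : Type} {G : SimpleGraph V} {rk : V → V → ℕ∞}

theorem IsBlocking.symm {M : Matching G} {v w : V} (h : IsBlocking G rk M v w) :
    IsBlocking G rk M w v :=
  ⟨h.1.symm, h.2.2, h.2.1⟩

theorem not_isBlocking_partner (M : Matching G) (v : V) :
    ¬ IsBlocking G rk M v (M.partner v) :=
  fun h => lt_irrefl _ h.2.1

theorem rank_partner_le_maxRank {M : Matching G} {v : V} (hv : M.partner v ≠ v) :
    rk v (M.partner v) ≤ maxRank G rk v :=
  le_biSup (rk v) (M.adj_of_ne v hv)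

variable [DecidableEq V]

theorem maxRank_le_triRank_inl_inr (v : V) (x : V ⊕ V) :
    maxRank G rk v ≤ triRank G rk (Sum.inl v) (Sum.inr x) := by
  rcases x with w | w <;> simp only [triRank] <;> split_ifs <;> simp

theorem not_isBlocking_triAugment_inl_inr {M : Matching G} {v : V} (hv : M.partner v ≠ v)
    (x : V ⊕ V) :
    ¬ IsBlocking (triGraph G) (triRank G rk) M.triAugment (Sum.inl v) (Sum.inr x) :=
  fun ⟨_, hlt, _⟩ =>
    hlt.not_ge ((rank_partner_le_maxRank hv).trans (maxRank_le_triRank_inl_inr v x))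

theorem not_isBlocking_triAugment_inr_inr (M : Matching G) (x y : V ⊕ V) :
    ¬ IsBlocking (triGraph G) (triRank G rk) M.triAugment (Sum.inr x) (Sum.inr y) := by
  intro hb
  have hadj := hb.1
  rcases x with v | v <;> rcases y with w | w <;> simp only [triGraph] at hadj
  all_goals subst hadj; exact not_isBlocking_partner M.triAugment _ hb

theorem Stable.triAugment {M : Matching G} (hM : Stable G rk M) (hperf : ∀ v, M.partner v ≠ v) :
    Stable (triGraph G) (triRank G rk) M.triAugment := by
  rintro (v | x) (w | y) hb
  · exact hM v w hb
  · exact not_isBlocking_triAugment_inl_inr (hperf v) y hb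
  · exact not_isBlocking_triAugment_inl_inr (hperf w) x hb.symm
  · exact not_isBlocking_triAugment_inr_inr M x y hb

end

theorem triGraph_stable_of_perfect_general {V : Type} [DecidableEq V]
    (G : SimpleGraph V) (rk : V → V → ℕ∞)
    (M : Matching G) (hM : Stable G rk M) (hperf : ∀ v, M.partner v ≠ v) :
    ∃ M' : Matching (triGraph G),
      Stable (triGraph G) (triRank G rk) M' ∧
      M'.partner = Sum.elim (fun v => Sum.inl (M.partner v))
        (Sum.elim (fun v => Sum.inr (Sum.inr v)) (fun v => Sum.inr (Sum.inl v))) :=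
  ⟨M.triAugment, hM.triAugment hperf, rfl⟩

/-- Triangle augmentation, forward direction: if `G` has a perfect
stable matching `M`, then the triangle-augmented instance has a stable matching,
namely `M` together with all the edges `{v', v''}`. -/
theorem triGraph_stable_of_perfect {V : Type} [Fintype V] [DecidableEq V]
    (G : SimpleGraph V) (rk : V → V → ℕ∞)
    (hself : ∀ v, rk v v = ⊤)
    (hfin : ∀ v w, G.Adj v w → rk v w ≠ ⊤)
    (M : Matching G) (hM : Stable G rk M) (hperf : ∀ v, M.partner v ≠ v) :
    ∃ M' : Matching (triGraph G),
      Stable (triGraph G) (triRank G rk) M' ∧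
      M'.partner = Sum.elim (fun v => Sum.inl (M.partner v))
        (Sum.elim (fun v => Sum.inr (Sum.inr v)) (fun v => Sum.inr (Sum.inl v))) :=
  triGraph_stable_of_perfect_general G rk M hM hperf

end
end

section
/- Vertex gadget (Lemma on (j, c_i, ℓ)-vertex gadgets): for all j, ℓ ∈ ℕ there exists an SRTI instance H with a distinguished vertex c_i whose only incident edge is e = {c_i, w} for a distinguished vertex w, with rk_{c_i}(w) = ℓ, such that: (i) stable matchings of H not containing e exist, the maximum size of a stable matching of H not containing e is j + 2, and every such matching leaves c_i unmatched while e is not blocking; (ii) stable matchings of H containing e exist and the maximum size of a stable matching of H containing e is 2j + 2 (counting the edge e); moreover the gadget H − c_i has 4j + 4 vertices and tree-cut width at most 4. -/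
open scoped Classical

noncomputable section

/-- A multigraph on an ambient type `A`: a set of vertices together with an
edge-multiplicity function on unordered pairs (loops allowed). -/
structure Multigraph (A : Type) where
  verts : Set A
  mult : Sym2 A → ℕ

namespace Multigraph

variable {A : Type} [Fintype A]

/-- The degree of a vertex in a multigraph; a loop contributes `2` to the degree. -/
def deg (M : Multigraph A) (x : A) : ℕ :=
  (∑ y : A, M.mult s(x, y)) + M.mult s(x, x)

/-- Suppressing the vertex `v`: delete `v` (and all edges incident to it) and, if `v`
had exactly two edge-endpoints at distinct neighbours `a`, `b`, add an edge `{a,b}`;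
if `v` had a double edge to a vertex `a`, add a loop at `a`.  (The formula below is
the intended operation when `deg v ≤ 2`.) -/
def suppress (M : Multigraph A) (v : A) : Multigraph A where
  verts := M.verts \ {v}
  mult := Sym2.lift ⟨fun x y =>
    if x = v ∨ y = v then 0
    else M.mult s(x, y) +
      (if x = y then (if M.mult s(v, x) = 2 then 1 else 0)
       else min (M.mult s(v, x)) 1 * min (M.mult s(v, y)) 1),
    by
      intro x y
      rcases eq_or_ne x y with rfl | hxy
      · rfl
      · dsimp only
        by_cases h : x = v ∨ y = v
        · rw [if_pos h, if_pos (Or.symm h)]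
        · rw [if_neg h, if_neg (fun hc => h (Or.symm hc)), if_neg hxy, if_neg (Ne.symm hxy)]
          have h1 : s(x, y) = s(y, x) := Sym2.eq_swap
          rw [h1, Nat.mul_comm]⟩

/-- One step of suppression: suppress some vertex of degree at most `2`. -/
def SuppressStep (M M' : Multigraph A) : Prop :=
  ∃ v ∈ M.verts, M.deg v ≤ 2 ∧ M' = M.suppress v

/-- A multigraph in which no vertex of degree at most `2` is left. -/
def Reduced (M : Multigraph A) : Prop := ∀ v ∈ M.verts, 3 ≤ M.deg v

/-- The number of vertices remaining after exhaustively suppressing vertices of degree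
at most `2`. -/
def reducedSize (M : Multigraph A) : ℕ :=
  sInf {n | ∃ M' : Multigraph A,
    Relation.ReflTransGen SuppressStep M M' ∧ M'.Reduced ∧ n = M'.verts.ncard}

end Multigraph

/-- A (rooted) tree-cut decomposition of a graph on vertex type `V`: a tree `T` on a
node type `N`, a root, and a near-partition of `V` into bags indexed by the nodes. -/
structure TreeCutDecomp (N V : Type) where
  T : SimpleGraph N
  connected : T.Connected
  acyclic : T.IsAcyclic
  root : N
  bag : N → Set V
  bag_disjoint : ∀ s t : N, s ≠ t → Disjoint (bag s) (bag t)
  bag_cover : ∀ v : V, ∃ t : N, v ∈ bag t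

namespace TreeCutDecomp

variable {N V : Type} [Fintype N] [Fintype V] (D : TreeCutDecomp N V)

/-- The nodes in the subtree rooted at `t`: those nodes whose every walk to the root
passes through `t`. -/
def subtree (t : N) : Set N := {u | ∀ p : D.T.Walk u D.root, t ∈ p.support}

/-- The set of graph vertices contained in bags of the subtree rooted at `t`. -/
def Yset (t : N) : Set V := {v | ∃ u ∈ D.subtree t, v ∈ D.bag u}

/-- The adhesion of a node `t`: the number of edges of `G` crossing between the vertices
below `t` and the remaining vertices (this is `cut(e(t))` for `t ≠ root`, and `0` for
the root). -/
def adh (G : SimpleGraph V) (t : N) : ℕ :=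
  Set.ncard {e : Sym2 V | e ∈ G.edgeSet ∧
    ∃ x y : V, e = s(x, y) ∧ x ∈ D.Yset t ∧ y ∉ D.Yset t}

/-- The nodes in the component of `T - t` containing the neighbour `s` of `t`:
those nodes whose every walk to `t` passes through `s`. -/
def branch (t s : N) : Set N := {u | ∀ p : D.T.Walk u t, s ∈ p.support}

/-- Some node whose bag contains `v`. -/
def nodeOf (v : V) : N := @Classical.epsilon N ⟨D.root⟩ (fun u => v ∈ D.bag u)

/-- The projection used to build the torso at `t`: vertices in the bag of `t` are kept,
and any other vertex is mapped to (the contracted vertex corresponding to) the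
component of `T - t` containing its bag's node, represented by the neighbour `s` of `t`
in that component. -/
def proj (t : N) (v : V) : V ⊕ N :=
  if v ∈ D.bag t then Sum.inl v
  else Sum.inr (@Classical.epsilon N ⟨D.root⟩
    (fun s => D.T.Adj t s ∧ D.nodeOf v ∈ D.branch t s))

/-- The torso of the decomposition at node `t`: the multigraph obtained from `G` by
contracting, for each component of `T - t`, the union of bags of that component into a
single vertex (no loops are created; parallel edges are counted with multiplicity). -/
def torso (G : SimpleGraph V) (t : N) : Multigraph (V ⊕ N) where
  verts := (Sum.inl '' D.bag t) ∪ (Sum.inr '' (D.T.neighborSet t))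
  mult := fun e => Set.ncard {f : Sym2 V | f ∈ G.edgeSet ∧
    Sym2.map (D.proj t) f = e ∧ ¬ (Sym2.map (D.proj t) f).IsDiag}

/-- The torso-size of a node `t`: the number of vertices left after exhaustively
suppressing vertices of degree at most `2` in the torso at `t`. -/
def tor (G : SimpleGraph V) (t : N) : ℕ := (D.torso G t).reducedSize

/-- The width of the tree-cut decomposition. -/
def width (G : SimpleGraph V) : ℕ :=
  Finset.univ.sup fun t : N => max (D.adh G t) (D.tor G t)

end TreeCutDecomp

/-- The tree-cut width of a graph: the minimum width of a (rooted) tree-cut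
decomposition. -/
def tcw {V : Type} [Fintype V] (G : SimpleGraph V) : ℕ :=
  sInf {w | ∃ (N : Type) (_ : Fintype N) (D : TreeCutDecomp N V), D.width G = w}


/-!
The gadget is a tree: the path `c – w – p – g – h` and, for each `k < j`, a branch `p – a_k`
at which `a_k` has two further neighbours `x_k`, `y_k`, and `x_k` a pendant neighbour `z_k`.
A matching avoiding `c w` leaves `c` unmatched, so stability forces `w p` (otherwise `c w`
blocks), then `g h`, and then `a_k x_k` for every `k`, because `p` prefers every `a_k` to `w`:
the stable matching avoiding `c w` is unique and has `j + 2` edges. The stable matching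
`c w`, `p g`, `a_k y_k`, `x_k z_k` leaves only `h` uncovered, so no matching of the `4j + 5`
vertices is larger. Finally `H − c` is a forest, so the decomposition with a single bag has
adhesion `0` and its torso disappears by repeatedly suppressing leaves: its width is `0`.
-/

namespace Matching

variable {V : Type} {G : SimpleGraph V}

@[ext] lemma ext {M N : Matching G} (h : M.partner = N.partner) : M = N := by
  cases M; cases N; cases h; rfl

lemma partner_eq_iff (M : Matching G) {u v : V} : M.partner u = v ↔ M.partner v = u := by
  constructor <;> rintro rfl <;> exact M.involutive _

lemma mk_mem_edgeSet_iff (M : Matching G) {u v : V} :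
    s(u, v) ∈ M.edgeSet ↔ u ≠ v ∧ M.partner u = v := by
  constructor
  · rintro ⟨x, hx, hxy⟩
    rcases Sym2.eq_iff.mp hxy with ⟨rfl, rfl⟩ | ⟨rfl, rfl⟩
    · exact ⟨hx.symm, rfl⟩
    · exact ⟨hx, M.involutive _⟩
  · rintro ⟨huv, rfl⟩
    exact ⟨u, huv.symm, rfl⟩

lemma partner_eq_self_of_forall_adj (M : Matching G) {v : V}
    (h : ∀ u, G.Adj v u → M.partner u ≠ v) : M.partner v = v := by
  by_contra hv
  exact h _ (M.adj_of_ne v hv) (M.involutive v)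

lemma two_mul_ncard_edgeSet [Fintype V] (M : Matching G) :
    2 * M.edgeSet.ncard = (Finset.univ.filter fun v => M.partner v ≠ v).card := by
  set S := Finset.univ.filter fun v => M.partner v ≠ v
  have hE : M.edgeSet = ↑(S.image fun v => s(v, M.partner v)) := by
    ext e
    simp [edgeSet, S, eq_comm]
  have hfiber : ∀ v ∈ S, S.filter (fun u => s(u, M.partner u) = s(v, M.partner v)) =
      {v, M.partner v} := by
    intro v hv
    ext u
    simp only [S, Finset.mem_filter, Finset.mem_univ, true_and, Finset.mem_insert,
      Finset.mem_singleton] at hv ⊢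
    constructor
    · rintro ⟨-, huv⟩
      rcases Sym2.eq_iff.mp huv with ⟨rfl, -⟩ | ⟨rfl, -⟩ <;> simp
    · rintro (rfl | rfl)
      · exact ⟨hv, rfl⟩
      · rw [M.involutive]
        exact ⟨Ne.symm hv, Sym2.eq_swap⟩
  rw [hE, Set.ncard_coe_finset, Finset.card_eq_sum_card_image (fun v => s(v, M.partner v)) S,
    mul_comm, ← smul_eq_mul, ← Finset.sum_const]
  refine Finset.sum_congr rfl fun e he => ?_
  obtain ⟨v, hv, rfl⟩ := Finset.mem_image.mp he
  rw [hfiber v hv, Finset.card_pair]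
  simpa [S, eq_comm] using hv

lemma two_mul_ncard_edgeSet_le [Fintype V] (M : Matching G) :
    2 * M.edgeSet.ncard ≤ Fintype.card V :=
  M.two_mul_ncard_edgeSet ▸ Finset.card_le_univ _

variable {V' : Type} {G' : SimpleGraph V'}

def map (φ : G ≃g G') (M : Matching G) : Matching G' where
  partner v := φ (M.partner (φ.symm v))
  involutive v := by simp [M.involutive]
  adj_of_ne v h := by
    have hne : M.partner (φ.symm v) ≠ φ.symm v := fun h' => h (by rw [h', φ.apply_symm_apply])
    simpa using φ.map_adj_iff.mpr (M.adj_of_ne _ hne)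

@[simp] lemma map_partner_apply (φ : G ≃g G') (M : Matching G) (a : V) :
    (M.map φ).partner (φ a) = φ (M.partner a) := by
  simp [map]

lemma map_symm_map (φ : G ≃g G') (M : Matching G') : (M.map φ.symm).map φ = M := by
  ext v
  simp [map]

lemma mk_mem_edgeSet_map (φ : G ≃g G') (M : Matching G) {a b : V} :
    s(φ a, φ b) ∈ (M.map φ).edgeSet ↔ s(a, b) ∈ M.edgeSet := by
  simp [mk_mem_edgeSet_iff]

lemma ncard_edgeSet_map (φ : G ≃g G') (M : Matching G) :
    (M.map φ).edgeSet.ncard = M.edgeSet.ncard := by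
  have hE : (M.map φ).edgeSet = Sym2.map φ '' M.edgeSet := by
    ext e
    induction e using Sym2.ind with
    | _ x y =>
      obtain ⟨a, rfl⟩ := φ.surjective x
      obtain ⟨b, rfl⟩ := φ.surjective y
      rw [mk_mem_edgeSet_map, ← Sym2.map_mk, (Sym2.map.injective φ.injective).mem_set_image]
  rw [hE, Set.ncard_image_of_injective _ (Sym2.map.injective φ.injective)]

end Matching

lemma Stable.map {V V' : Type} {G : SimpleGraph V} {G' : SimpleGraph V'} (φ : G ≃g G')
    {rk : V → V → ℕ∞} {rk' : V' → V' → ℕ∞} (hrk : ∀ a b, rk' (φ a) (φ b) = rk a b)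
    {M : Matching G} (hM : Stable G rk M) : Stable G' rk' (M.map φ) := by
  rintro v u ⟨hadj, hv, hu⟩
  obtain ⟨a, rfl⟩ := φ.surjective v
  obtain ⟨b, rfl⟩ := φ.surjective u
  simp only [Matching.map_partner_apply, hrk] at hv hu
  exact hM a b ⟨φ.map_adj_iff.mp hadj, hv, hu⟩

lemma Stable.of_fromRel {V : Type} {r : V → V → Prop} {rk : V → V → ℕ∞}
    {M : Matching (SimpleGraph.fromRel r)}
    (h : ∀ u v, r u v → ¬ (rk u v < rk u (M.partner u) ∧ rk v u < rk v (M.partner v))) :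
    Stable (SimpleGraph.fromRel r) rk M := by
  rintro u v ⟨hadj, hu, hv⟩
  rcases ((SimpleGraph.fromRel_adj _ _ _).mp hadj).2 with huv | hvu
  · exact h u v huv ⟨hu, hv⟩
  · exact h v u hvu ⟨hv, hu⟩

/-- `(H, rk)` is a `(j, c, ℓ)`-vertex gadget attached through the edge `e = s(c, w)`. -/
def IsVertexGadget {V : Type} (j ℓ : ℕ) (H : SimpleGraph V) (rk : V → V → ℕ∞) (c w : V) :
    Prop :=
  (∀ v, rk v v = ⊤) ∧
  (∀ v u, H.Adj v u → rk v u ≠ ⊤) ∧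
  H.Adj c w ∧ (∀ x, H.Adj c x → x = w) ∧ rk c w = (ℓ : ℕ∞) ∧
  (∃ M : Matching H, Stable H rk M ∧ s(c, w) ∉ M.edgeSet ∧ M.edgeSet.ncard = j + 2) ∧
  (∀ M : Matching H, Stable H rk M → s(c, w) ∉ M.edgeSet →
    M.edgeSet.ncard ≤ j + 2 ∧ M.partner c = c ∧ ¬ IsBlocking H rk M c w) ∧
  (∃ M : Matching H, Stable H rk M ∧ s(c, w) ∈ M.edgeSet ∧ M.edgeSet.ncard = 2 * j + 2) ∧
  (∀ M : Matching H, Stable H rk M → s(c, w) ∈ M.edgeSet → M.edgeSet.ncard ≤ 2 * j + 2)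

open Matching in
lemma IsVertexGadget.map {V V' : Type} {j ℓ : ℕ} {G : SimpleGraph V} {G' : SimpleGraph V'}
    {rk : V → V → ℕ∞} {c w : V} (φ : G ≃g G') (h : IsVertexGadget j ℓ G rk c w) :
    IsVertexGadget j ℓ G' (fun v u => rk (φ.symm v) (φ.symm u)) (φ c) (φ w) := by
  obtain ⟨hself, hfin, hcw, honly, hrk, ⟨M₁, hM₁, he₁, hcard₁⟩, havoid,
    ⟨M₂, hM₂, he₂, hcard₂⟩, hcontain⟩ := h
  have hstab : ∀ {M : Matching G}, Stable G rk M →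
      Stable G' (fun v u => rk (φ.symm v) (φ.symm u)) (M.map φ) :=
    Stable.map φ fun a b => by simp
  have hstab_symm : ∀ {M : Matching G'}, Stable G' (fun v u => rk (φ.symm v) (φ.symm u)) M →
      Stable G rk (M.map φ.symm) :=
    Stable.map φ.symm fun _ _ => rfl
  have hmem : ∀ M : Matching G',
      s(φ c, φ w) ∈ M.edgeSet ↔ s(c, w) ∈ (M.map φ.symm).edgeSet :=
    fun M => by rw [← mk_mem_edgeSet_map φ, map_symm_map]
  refine ⟨fun v => hself _, fun v u huv => hfin _ _ (φ.symm.map_adj_iff.mpr huv),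
    φ.map_adj_iff.mpr hcw, fun x hx => ?_, by simpa using hrk,
    ⟨M₁.map φ, hstab hM₁, by rwa [mk_mem_edgeSet_map], by rw [ncard_edgeSet_map, hcard₁]⟩,
    fun M hM he => ?_,
    ⟨M₂.map φ, hstab hM₂, by rwa [mk_mem_edgeSet_map], by rw [ncard_edgeSet_map, hcard₂]⟩,
    fun M hM he => ?_⟩
  · obtain ⟨a, rfl⟩ := φ.surjective x
    rw [honly a (φ.map_adj_iff.mp hx)]
  · obtain ⟨hcard, hc, -⟩ := havoid _ (hstab_symm hM) (by rwa [← hmem])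
    refine ⟨?_, ?_, hM _ _⟩ <;> rw [← map_symm_map φ M]
    · rwa [ncard_edgeSet_map]
    · rw [map_partner_apply, hc]
  · rw [← map_symm_map φ M, ncard_edgeSet_map]
    exact hcontain _ (hstab_symm hM) (by rwa [← hmem])

attribute [ext] Multigraph

namespace SimpleGraph

variable {V W : Type} {G : SimpleGraph V} {f : V → ℕ}

/-- `f` witnesses that `G` is a forest: every vertex has at most one neighbour that is not
strictly higher than itself. -/
def IsForestHeight (G : SimpleGraph V) (f : V → ℕ) : Prop :=
  ∀ ⦃v u u'⦄, G.Adj v u → G.Adj v u' → f u ≤ f v → f u' ≤ f v → u = u'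

lemma isForestHeight_fromRel {parent : V → V} (h : ∀ v, parent v ≠ v → f (parent v) < f v) :
    (fromRel fun u v => v = parent u).IsForestHeight f := by
  have hparent : ∀ {v u}, (fromRel fun u v => v = parent u).Adj v u → f u ≤ f v →
      u = parent v := by
    intro v u hadj hle
    rcases (fromRel_adj _ _ _).mp hadj with ⟨hne, huv | rfl⟩
    · exact huv
    · exact absurd (h u hne) (not_lt.mpr hle)
  intro v u u' hu hu' hle hle'
  rw [hparent hu hle, hparent hu' hle']

lemma IsForestHeight.comap (hf : G.IsForestHeight f) {φ : W → V} (hφ : Function.Injective φ) :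
    (G.comap φ).IsForestHeight (f ∘ φ) :=
  fun _ _ _ hu hu' hle hle' => hφ (hf hu hu' hle hle')

lemma IsForestHeight.map (hf : G.IsForestHeight f) (ψ : V ↪ W) {g : W → ℕ}
    (hg : ∀ v, g (ψ v) = f v) : (G.map ψ).IsForestHeight g := by
  intro _ _ _ hadj hadj' hle hle'
  obtain ⟨v, u, hu, rfl, rfl⟩ := (map_adj ψ G _ _).mp hadj
  obtain ⟨v', u', hu', hv', rfl⟩ := (map_adj ψ G _ _).mp hadj'
  obtain rfl := ψ.injective hv'
  rw [hg, hg] at hle hle'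
  rw [hf hu hu' hle hle']

lemma IsForestHeight.exists_mem_subsingleton_adj (hf : G.IsForestHeight f) {S : Finset V}
    (hS : S.Nonempty) : ∃ v ∈ S, ∀ u ∈ S, ∀ u' ∈ S, G.Adj v u → G.Adj v u' → u = u' := by
  obtain ⟨v, hv, hmax⟩ := S.exists_max_image f hS
  exact ⟨v, hv, fun u hu u' hu' hadj hadj' => hf hadj hadj' (hmax u hu) (hmax u' hu')⟩

variable [Fintype V]

def toMultigraph (G : SimpleGraph V) (S : Set V) : Multigraph V where
  verts := S
  mult e := if e ∈ G.edgeSet ∧ ∀ x ∈ e, x ∈ S then 1 else 0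

lemma toMultigraph_mult_mk (S : Set V) (x y : V) :
    (G.toMultigraph S).mult s(x, y) = if G.Adj x y ∧ x ∈ S ∧ y ∈ S then 1 else 0 := by
  simp [toMultigraph]

lemma deg_toMultigraph_le_one {S : Set V} {v : V}
    (hv : ∀ u ∈ S, ∀ u' ∈ S, G.Adj v u → G.Adj v u' → u = u') :
    (G.toMultigraph S).deg v ≤ 1 := by
  simp only [Multigraph.deg, toMultigraph_mult_mk, SimpleGraph.irrefl, false_and, if_false,
    add_zero]
  rw [← Finset.card_filter]
  refine Finset.card_le_one.mpr fun u hu u' hu' => ?_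
  simp only [Finset.mem_filter, Finset.mem_univ, true_and] at hu hu'
  exact hv u hu.2.2 u' hu'.2.2 hu.1 hu'.1

lemma suppressStep_toMultigraph {S : Set V} {v : V} (hvS : v ∈ S)
    (hv : ∀ u ∈ S, ∀ u' ∈ S, G.Adj v u → G.Adj v u' → u = u') :
    Multigraph.SuppressStep (G.toMultigraph S) (G.toMultigraph (S \ {v})) := by
  refine ⟨v, hvS, (deg_toMultigraph_le_one hv).trans (by norm_num), Multigraph.ext rfl ?_⟩
  funext e
  induction e using Sym2.ind with
  | _ x y =>
    simp only [Multigraph.suppress, Sym2.lift_mk, toMultigraph_mult_mk]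
    by_cases hxy : x = v ∨ y = v
    · rcases hxy with rfl | rfl <;> simp
    · push Not at hxy
      simp only [Set.mem_sdiff, Set.mem_singleton_iff, hxy.1, hxy.2, not_false_eq_true, and_true,
        or_self, if_false, Nat.left_eq_add]
      rcases eq_or_ne x y with rfl | hne
      · rw [if_pos rfl]
        split_ifs <;> omega
      · have hx_or_hy : ¬ (G.Adj v x ∧ v ∈ S ∧ x ∈ S) ∨ ¬ (G.Adj v y ∧ v ∈ S ∧ y ∈ S) := by
          by_contra! h
          exact hne (hv x h.1.2.2 y h.2.2.2 h.1.1 h.2.1)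
        rcases hx_or_hy with h | h <;> simp [hne, h]

lemma IsForestHeight.reflTransGen_toMultigraph_empty (hf : G.IsForestHeight f) (S : Finset V) :
    Relation.ReflTransGen Multigraph.SuppressStep (G.toMultigraph S) (G.toMultigraph ∅) := by
  induction S using Finset.strongInduction with
  | H S ih =>
    rcases S.eq_empty_or_nonempty with rfl | hS
    · rw [Finset.coe_empty]
    · obtain ⟨v, hvS, hv⟩ := hf.exists_mem_subsingleton_adj hS
      refine Relation.ReflTransGen.head ?_ (ih _ (S.erase_ssubset hvS))
      rw [Finset.coe_erase]
      exact suppressStep_toMultigraph hvS hv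

lemma IsForestHeight.reducedSize_toMultigraph (hf : G.IsForestHeight f) (S : Set V) :
    (G.toMultigraph S).reducedSize = 0 := by
  refine Nat.eq_zero_of_le_zero (Nat.sInf_le ⟨G.toMultigraph ∅, ?_, fun _ h => h.elim, ?_⟩)
  · simpa using hf.reflTransGen_toMultigraph_empty S.toFinset
  · simp [toMultigraph]

end SimpleGraph

namespace TreeCutDecomp

variable {V : Type}

def single (V : Type) : TreeCutDecomp PUnit V where
  T := ⊥
  connected := .of_subsingleton
  acyclic := SimpleGraph.isAcyclic_bot
  root := ()
  bag _ := Set.univ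
  bag_disjoint s t hst := (hst (Subsingleton.elim s t)).elim
  bag_cover _ := ⟨(), trivial⟩

lemma adh_single (G : SimpleGraph V) : (single V).adh G () = 0 := by
  have hY : ∀ v, v ∈ (single V).Yset () := fun v => ⟨(), fun p => p.start_mem_support, trivial⟩
  simp [adh, hY]

lemma torso_single [Fintype V] (G : SimpleGraph V) :
    (single V).torso G () = (G.map Function.Embedding.inl).toMultigraph (Set.range Sum.inl) := by
  have hproj : (single V).proj () = Sum.inl := funext fun v => if_pos trivial
  have hinl : Function.Injective (Sym2.map (Sum.inl : V → V ⊕ PUnit.{1})) :=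
    Sym2.map.injective Sum.inl_injective
  refine Multigraph.ext (by simp [torso, single, SimpleGraph.toMultigraph]) (funext fun e => ?_)
  simp only [torso, SimpleGraph.toMultigraph, hproj]
  by_cases he : e ∈ (G.map Function.Embedding.inl).edgeSet
  · have hrange : ∀ x ∈ e, x ∈ Set.range Sum.inl := by
      rw [SimpleGraph.edgeSet_map] at he
      obtain ⟨f₀, -, rfl⟩ := he
      induction f₀ using Sym2.ind
      simp
    rw [if_pos ⟨he, hrange⟩, Set.ncard_eq_one]
    rw [SimpleGraph.edgeSet_map] at he
    obtain ⟨f₀, hf₀, rfl⟩ := he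
    refine ⟨f₀, Set.eq_singleton_iff_unique_mem.mpr ⟨⟨hf₀, rfl, ?_⟩, fun f hf => hinl hf.2.1⟩⟩
    exact (Sym2.isDiag_map Sum.inl_injective).not.mpr (G.not_isDiag_of_mem_edgeSet hf₀)
  · rw [if_neg (fun h => he h.1), Set.ncard_eq_zero]
    refine Set.eq_empty_of_forall_notMem fun f ⟨hf, hfe, _⟩ => he ?_
    rw [SimpleGraph.edgeSet_map]
    exact ⟨f, hf, hfe⟩

lemma width_single [Fintype V] {G : SimpleGraph V} {f : V → ℕ} (hf : G.IsForestHeight f) :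
    (single V).width G = 0 := by
  have hforest : (G.map (Function.Embedding.inl (β := PUnit))).IsForestHeight (Sum.elim f 0) :=
    hf.map _ fun _ => rfl
  have htor : (single V).tor G () = 0 := by
    rw [tor, torso_single, hforest.reducedSize_toMultigraph]
  simp [width, adh_single, htor]

end TreeCutDecomp

lemma SimpleGraph.IsForestHeight.tcw_eq_zero {V : Type} [Fintype V] {G : SimpleGraph V}
    {f : V → ℕ} (hf : G.IsForestHeight f) : tcw G = 0 :=
  Nat.eq_zero_of_le_zero <|
    Nat.sInf_le ⟨PUnit, inferInstance, .single V, TreeCutDecomp.width_single hf⟩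

inductive GadgetCore : Type
  | c | w | p | g | h
  deriving DecidableEq

inductive GadgetBlock : Type
  | a | x | y | z
  deriving DecidableEq

instance : Fintype GadgetCore := ⟨{.c, .w, .p, .g, .h}, fun v => by cases v <;> simp⟩

instance : Fintype GadgetBlock := ⟨{.a, .x, .y, .z}, fun v => by cases v <;> simp⟩

lemma GadgetCore.sum_univ (f : GadgetCore → ℕ) :
    ∑ v, f v = f .c + f .w + f .p + f .g + f .h := by
  simp [Finset.univ, Fintype.elems, add_assoc]

lemma GadgetBlock.sum_univ (f : GadgetBlock → ℕ) : ∑ v, f v = f .a + f .x + f .y + f .z := by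
  simp [Finset.univ, Fintype.elems, add_assoc]

/-- The core vertices `c, w, p, g, h`, and the block `a_k, x_k, y_k, z_k` for each `k < j`. -/
abbrev GadgetVertex (j : ℕ) : Type := GadgetCore ⊕ (Fin j × GadgetBlock)

lemma card_gadgetVertex (j : ℕ) : Fintype.card (GadgetVertex j) = 4 * j + 5 := by
  simp only [Fintype.card_sum, Fintype.card_prod, Fintype.card_fin]
  rw [show Fintype.card GadgetCore = 5 from rfl, show Fintype.card GadgetBlock = 4 from rfl]
  ring

namespace VertexGadget

variable {j ℓ : ℕ}

def parent : GadgetVertex j → GadgetVertex j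
  | .inl .c => .inl .c
  | .inl .w => .inl .c
  | .inl .p => .inl .w
  | .inl .g => .inl .p
  | .inl .h => .inl .g
  | .inr (_, .a) => .inl .p
  | .inr (k, .x) => .inr (k, .a)
  | .inr (k, .y) => .inr (k, .a)
  | .inr (k, .z) => .inr (k, .x)

def height : GadgetVertex j → ℕ
  | .inl .c => 0
  | .inl .w => 1
  | .inl .p => 2
  | .inl .g => 3
  | .inl .h => 4
  | .inr (_, .a) => 3
  | .inr (_, .x) => 4
  | .inr (_, .y) => 4
  | .inr (_, .z) => 5

def graph (j : ℕ) : SimpleGraph (GadgetVertex j) := .fromRel fun u v => v = parent u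

lemma isForestHeight_graph : (graph j).IsForestHeight height :=
  SimpleGraph.isForestHeight_fromRel <| by
    rintro ((_ | _ | _ | _ | _) | ⟨k, _ | _ | _ | _⟩) h <;> simp_all [parent, height]

def pref (ℓ : ℕ) : GadgetVertex j → GadgetVertex j → ℕ
  | .inl .c, .inl .w => ℓ
  | .inl .w, .inl .c => 2
  | .inl .w, .inl .p => 1
  | .inl .p, .inl .w => 3
  | .inl .p, .inl .g => 1
  | .inl .p, .inr (_, .a) => 2
  | .inl .g, .inl .p => 1
  | .inl .g, .inl .h => 1
  | .inl .h, .inl .g => 1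
  | .inr (_, .a), .inl .p => 2
  | .inr (_, .a), .inr (_, .x) => 1
  | .inr (_, .a), .inr (_, .y) => 3
  | .inr (_, .x), .inr (_, .a) => 1
  | .inr (_, .x), .inr (_, .z) => 1
  | .inr (_, .y), .inr (_, .a) => 1
  | .inr (_, .z), .inr (_, .x) => 1
  | _, _ => 0

def rank (j ℓ : ℕ) (u v : GadgetVertex j) : ℕ∞ := if (graph j).Adj u v then pref ℓ u v else ⊤

lemma rank_self (ℓ : ℕ) (v : GadgetVertex j) : rank j ℓ v v = ⊤ := by
  simp [rank]

lemma rank_ne_top {u v : GadgetVertex j} (h : (graph j).Adj u v) : rank j ℓ u v ≠ ⊤ := by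
  simp [rank, h]

def avoidingMatching (j : ℕ) : Matching (graph j) where
  partner
    | .inl .c => .inl .c
    | .inl .w => .inl .p
    | .inl .p => .inl .w
    | .inl .g => .inl .h
    | .inl .h => .inl .g
    | .inr (k, .a) => .inr (k, .x)
    | .inr (k, .x) => .inr (k, .a)
    | .inr (k, .y) => .inr (k, .y)
    | .inr (k, .z) => .inr (k, .z)
  involutive := by rintro ((_ | _ | _ | _ | _) | ⟨k, _ | _ | _ | _⟩) <;> rfl
  adj_of_ne := by
    rintro ((_ | _ | _ | _ | _) | ⟨k, _ | _ | _ | _⟩) h <;> simp_all [graph, parent]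

def containingMatching (j : ℕ) : Matching (graph j) where
  partner
    | .inl .c => .inl .w
    | .inl .w => .inl .c
    | .inl .p => .inl .g
    | .inl .g => .inl .p
    | .inl .h => .inl .h
    | .inr (k, .a) => .inr (k, .y)
    | .inr (k, .x) => .inr (k, .z)
    | .inr (k, .y) => .inr (k, .a)
    | .inr (k, .z) => .inr (k, .x)
  involutive := by rintro ((_ | _ | _ | _ | _) | ⟨k, _ | _ | _ | _⟩) <;> rfl
  adj_of_ne := by
    rintro ((_ | _ | _ | _ | _) | ⟨k, _ | _ | _ | _⟩) h <;> simp_all [graph, parent]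

lemma stable_avoidingMatching (ℓ : ℕ) : Stable (graph j) (rank j ℓ) (avoidingMatching j) :=
  Stable.of_fromRel <| by
    rintro ((_ | _ | _ | _ | _) | ⟨k, _ | _ | _ | _⟩) _ rfl <;>
      simp [rank, pref, graph, parent, avoidingMatching]

lemma stable_containingMatching (ℓ : ℕ) :
    Stable (graph j) (rank j ℓ) (containingMatching j) :=
  Stable.of_fromRel <| by
    rintro ((_ | _ | _ | _ | _) | ⟨k, _ | _ | _ | _⟩) _ rfl <;>
      simp [rank, pref, graph, parent, containingMatching]

lemma ncard_avoidingMatching : (avoidingMatching j).edgeSet.ncard = j + 2 := by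
  have hmatched : 2 * (avoidingMatching j).edgeSet.ncard = 2 * j + 4 := by
    rw [Matching.two_mul_ncard_edgeSet, Finset.card_filter, Fintype.sum_sum_type,
      Fintype.sum_prod_type]
    simp [GadgetCore.sum_univ, GadgetBlock.sum_univ, avoidingMatching]
    ring
  omega

lemma ncard_containingMatching : (containingMatching j).edgeSet.ncard = 2 * j + 2 := by
  have hmatched : 2 * (containingMatching j).edgeSet.ncard = 4 * j + 4 := by
    rw [Matching.two_mul_ncard_edgeSet, Finset.card_filter, Fintype.sum_sum_type,
      Fintype.sum_prod_type]
    simp [GadgetCore.sum_univ, GadgetBlock.sum_univ, containingMatching]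
    ring
  omega

section Neighbours

variable {v : GadgetVertex j}

lemma eq_of_adj_c (h : (graph j).Adj (.inl .c) v) : v = .inl .w := by
  rcases v with (_ | _ | _ | _ | _) | ⟨k', _ | _ | _ | _⟩ <;> simp_all [graph, parent]

lemma eq_or_eq_of_adj_w (h : (graph j).Adj (.inl .w) v) : v = .inl .c ∨ v = .inl .p := by
  rcases v with (_ | _ | _ | _ | _) | ⟨k', _ | _ | _ | _⟩ <;> simp_all [graph, parent]

lemma eq_or_eq_of_adj_g (h : (graph j).Adj (.inl .g) v) : v = .inl .p ∨ v = .inl .h := by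
  rcases v with (_ | _ | _ | _ | _) | ⟨k', _ | _ | _ | _⟩ <;> simp_all [graph, parent]

lemma eq_of_adj_h (h : (graph j).Adj (.inl .h) v) : v = .inl .g := by
  rcases v with (_ | _ | _ | _ | _) | ⟨k', _ | _ | _ | _⟩ <;> simp_all [graph, parent]

lemma eq_or_eq_or_eq_of_adj_a {k : Fin j} (h : (graph j).Adj (.inr (k, .a)) v) :
    v = .inl .p ∨ v = .inr (k, .x) ∨ v = .inr (k, .y) := by
  rcases v with (_ | _ | _ | _ | _) | ⟨k', _ | _ | _ | _⟩ <;> simp_all [graph, parent, eq_comm]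

lemma eq_of_adj_y {k : Fin j} (h : (graph j).Adj (.inr (k, .y)) v) : v = .inr (k, .a) := by
  rcases v with (_ | _ | _ | _ | _) | ⟨k', _ | _ | _ | _⟩ <;> simp_all [graph, parent]

lemma eq_of_adj_z {k : Fin j} (h : (graph j).Adj (.inr (k, .z)) v) : v = .inr (k, .x) := by
  rcases v with (_ | _ | _ | _ | _) | ⟨k', _ | _ | _ | _⟩ <;> simp_all [graph, parent]

end Neighbours

section Forcing

variable {M : Matching (graph j)}

lemma partner_c_eq (he : s(.inl .c, .inl .w) ∉ M.edgeSet) : M.partner (.inl .c) = .inl .c := by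
  refine M.partner_eq_self_of_forall_adj fun v hv hvc => he ?_
  rw [eq_of_adj_c hv] at hvc
  exact M.mk_mem_edgeSet_iff.mpr ⟨by simp, M.partner_eq_iff.mp hvc⟩

lemma partner_w_eq (hM : Stable (graph j) (rank j ℓ) M) (hc : M.partner (.inl .c) = .inl .c) :
    M.partner (.inl .w) = .inl .p := by
  by_cases hw : M.partner (.inl .w) = .inl .w
  · exact (hM (.inl .c) (.inl .w) ⟨by simp [graph, parent],
      by simp +decide [hc, rank, pref, graph, parent],
      by simp +decide [hw, rank, pref, graph, parent]⟩).elim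
  · refine (eq_or_eq_of_adj_w (M.adj_of_ne _ hw)).resolve_left fun hwc => ?_
    simpa [hc] using M.partner_eq_iff.mp hwc

lemma partner_g_eq (hM : Stable (graph j) (rank j ℓ) M) (hp : M.partner (.inl .p) = .inl .w) :
    M.partner (.inl .g) = .inl .h := by
  by_cases hg : M.partner (.inl .g) = .inl .g
  · have hh : M.partner (.inl .h) = .inl .h :=
      M.partner_eq_self_of_forall_adj fun v hv => by simp [eq_of_adj_h hv, hg]
    exact (hM (.inl .g) (.inl .h) ⟨by simp [graph, parent],
      by simp [hg, rank, pref, graph, parent], by simp [hh, rank, pref, graph, parent]⟩).elim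
  · refine (eq_or_eq_of_adj_g (M.adj_of_ne _ hg)).resolve_left fun hgp => ?_
    simpa [hp] using M.partner_eq_iff.mp hgp

lemma partner_a_eq (hM : Stable (graph j) (rank j ℓ) M) (hp : M.partner (.inl .p) = .inl .w)
    (k : Fin j) : M.partner (.inr (k, .a)) = .inr (k, .x) := by
  -- otherwise `p a_k` blocks: `p` ranks `a_k` above `w`, and `a_k` ranks `p` above `y_k`
  have hpa : M.partner (.inr (k, .a)) ≠ .inr (k, .a) ∧
      M.partner (.inr (k, .a)) ≠ .inr (k, .y) := by
    constructor <;> intro hk <;>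
      exact hM (.inl .p) (.inr (k, .a)) ⟨by simp [graph, parent],
        by simp +decide [hp, rank, pref, graph, parent],
        by simp +decide [hk, rank, pref, graph, parent]⟩
  rcases eq_or_eq_or_eq_of_adj_a (M.adj_of_ne _ hpa.1) with hkp | hkx | hky
  · simpa [hp] using M.partner_eq_iff.mp hkp
  · exact hkx
  · exact (hpa.2 hky).elim

theorem eq_avoidingMatching (hM : Stable (graph j) (rank j ℓ) M)
    (he : s(.inl .c, .inl .w) ∉ M.edgeSet) : M = avoidingMatching j := by
  have hw := partner_w_eq hM (partner_c_eq he)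
  have hp := M.partner_eq_iff.mp hw
  have hg := partner_g_eq hM hp
  have ha := partner_a_eq hM hp
  ext v
  rcases v with (_ | _ | _ | _ | _) | ⟨k, _ | _ | _ | _⟩
  · exact partner_c_eq he
  · exact hw
  · exact hp
  · exact hg
  · exact M.partner_eq_iff.mp hg
  · exact ha k
  · exact M.partner_eq_iff.mp (ha k)
  · exact M.partner_eq_self_of_forall_adj fun v hv => by simp [eq_of_adj_y hv, ha]
  · exact M.partner_eq_self_of_forall_adj fun v hv => by
      simp [eq_of_adj_z hv, M.partner_eq_iff.mp (ha k)]

end Forcing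

theorem isVertexGadget (j ℓ : ℕ) :
    IsVertexGadget j ℓ (graph j) (rank j ℓ) (.inl .c) (.inl .w) := by
  refine ⟨rank_self ℓ, fun _ _ => rank_ne_top, by simp [graph, parent], fun _ => eq_of_adj_c,
    by simp [rank, pref, graph, parent],
    ⟨avoidingMatching j, stable_avoidingMatching ℓ, ?_, ncard_avoidingMatching⟩,
    fun M hM he => ?_,
    ⟨containingMatching j, stable_containingMatching ℓ, ?_, ncard_containingMatching⟩,
    fun M _ _ => ?_⟩
  · simp [Matching.mk_mem_edgeSet_iff, avoidingMatching]
  · obtain rfl := eq_avoidingMatching hM he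
    exact ⟨ncard_avoidingMatching.le, rfl, hM _ _⟩
  · simp [Matching.mk_mem_edgeSet_iff, containingMatching]
  · have := M.two_mul_ncard_edgeSet_le
    rw [card_gadgetVertex] at this
    omega

end VertexGadget

/-- **vertex gadget.** For all `j, ℓ ∈ ℕ` there is an SRTI instance `H`
(on `4j + 5` vertices) with distinguished vertices `c` and `w` such that the only edge
incident to `c` is `e = {c, w}`, ranked `ℓ` by `c`, and:
(i) there is a stable matching not containing `e`, the maximum size of a stable
matching not containing `e` is `j + 2`, and every such matching leaves `c` unmatched
while `e` is not blocking;
(ii) there is a stable matching containing `e`, and the maximum size of a stable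
matching containing `e` is `2j + 2` (counting `e`).
Moreover the gadget `H − c` has `4j + 4` vertices and tree-cut width at most `4`. -/
theorem vertex_gadget (j ℓ : ℕ) :
    ∃ (n : ℕ) (H : SimpleGraph (Fin n)) (rk : Fin n → Fin n → ℕ∞) (c w : Fin n),
      (∀ v, rk v v = ⊤) ∧
      (∀ v u, H.Adj v u → rk v u ≠ ⊤) ∧
      H.Adj c w ∧ (∀ x, H.Adj c x → x = w) ∧ rk c w = (ℓ : ℕ∞) ∧
      -- (i)
      (∃ M : Matching H, Stable H rk M ∧ s(c, w) ∉ M.edgeSet ∧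
        M.edgeSet.ncard = j + 2) ∧
      (∀ M : Matching H, Stable H rk M → s(c, w) ∉ M.edgeSet →
        M.edgeSet.ncard ≤ j + 2 ∧ M.partner c = c ∧ ¬ IsBlocking H rk M c w) ∧
      -- (ii)
      (∃ M : Matching H, Stable H rk M ∧ s(c, w) ∈ M.edgeSet ∧
        M.edgeSet.ncard = 2 * j + 2) ∧
      (∀ M : Matching H, Stable H rk M → s(c, w) ∈ M.edgeSet →
        M.edgeSet.ncard ≤ 2 * j + 2) ∧
      -- size and tree-cut width of the gadget `H − c`
      n = 4 * j + 5 ∧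
      tcw (SimpleGraph.comap (Subtype.val : {x : Fin n // x ≠ c} → Fin n) H) ≤ 4 := by
  let e := Fintype.equivFinOfCardEq (card_gadgetVertex j)
  obtain ⟨h₁, h₂, h₃, h₄, h₅, h₆, h₇, h₈, h₉⟩ :=
    (VertexGadget.isVertexGadget j ℓ).map (SimpleGraph.Iso.map e _)
  have hforest : (SimpleGraph.map e.toEmbedding (VertexGadget.graph j)).IsForestHeight
      (VertexGadget.height ∘ e.symm) :=
    VertexGadget.isForestHeight_graph.map _ fun _ => by simp
  exact ⟨_, _, _, _, _, h₁, h₂, h₃, h₄, h₅, h₆, h₇, h₈, h₉, rfl,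
    ((hforest.comap Subtype.val_injective).tcw_eq_zero).trans_le (Nat.zero_le 4)⟩
end
end
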